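/- Let (P, Σ) be a crease pattern on an orthogonal polygon P with axis-aligned creases Σ, and suppose some line ℓ* containing a crease of Σ also contains a point of a facet of P (a point of P not on any crease or on the boundary of P). Then (P, Σ) admits no sequence of legal infinite all-layers simple folds using up all creases. -/
import Mathlib


/-- An axis for an infinite all-layers simple fold: `vert` tells whether the
fold line is vertical, `keepLow` tells which closed side stays put, and `a`
is the coordinate of the line. -/
structure FoldAxis where
  vert : Bool
  keepLow : Bool
  a : ℝ

/-- The (infinite) fold line of an axis. -/
def axisLine (ax : FoldAxis) : Set (ℝ × ℝ) :=
  {p | (if ax.vert then p.1 else p.2) = ax.a}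

open Classical in
/-- The fold map: points on the kept closed half-plane stay put, the others
are reflected across the fold line. -/
noncomputable def foldMap (ax : FoldAxis) (p : ℝ × ℝ) : ℝ × ℝ :=
  if (if ax.keepLow then (if ax.vert then p.1 else p.2) ≤ ax.a
      else ax.a ≤ (if ax.vert then p.1 else p.2)) then p
  else if ax.vert then (2 * ax.a - p.1, p.2) else (p.1, 2 * ax.a - p.2)

/-- Legality of an infinite all-layers simple fold of the pattern with paper
`P` and crease set `S` along `ax`: (1) the fold line meets the paper only in
creases or boundary; (2) no crease point is brought onto a facet point
(a point of `P` neither on a crease nor on the boundary of `P`). -/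
def LegalFold (P S : Set (ℝ × ℝ)) (ax : FoldAxis) : Prop :=
  (axisLine ax ∩ P ⊆ S ∪ frontier P) ∧
  ∀ p ∈ S, ∀ q ∈ P, q ∉ S → q ∉ frontier P → foldMap ax p ≠ foldMap ax q

/-- The crease pattern resulting from a fold: the paper is folded over, the
creases on the fold line are used up, and the remaining creases are overlaid
(overlapping creases merge as sets). -/
def foldPattern (P S : Set (ℝ × ℝ)) (ax : FoldAxis) : Set (ℝ × ℝ) × Set (ℝ × ℝ) :=
  (foldMap ax '' P, foldMap ax '' (S \ axisLine ax))

/-- Every fold in the sequence of axes is legal. -/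
def ChainLegal : List FoldAxis → Set (ℝ × ℝ) → Set (ℝ × ℝ) → Prop
  | [], _, _ => True
  | ax :: rest, P, S =>
      LegalFold P S ax ∧
        ChainLegal rest (foldPattern P S ax).1 (foldPattern P S ax).2

/-- The pattern resulting from a sequence of folds. -/
def runFolds : List FoldAxis → Set (ℝ × ℝ) → Set (ℝ × ℝ) → Set (ℝ × ℝ) × Set (ℝ × ℝ)
  | [], P, S => (P, S)
  | ax :: rest, P, S => runFolds rest (foldPattern P S ax).1 (foldPattern P S ax).2

/-- `(P, S)` admits a sequence of legal infinite all-layers simple folds using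
up all creases. -/
def SimplyFoldable (P S : Set (ℝ × ℝ)) : Prop :=
  ∃ axes : List FoldAxis, ChainLegal axes P S ∧ (runFolds axes P S).2 = ∅

namespace NF


def coord (b : Bool) (p : ℝ × ℝ) : ℝ := if b then p.1 else p.2

noncomputable def reflB (v : Bool) (a : ℝ) (p : ℝ × ℝ) : ℝ × ℝ :=
  if v then (2 * a - p.1, p.2) else (p.1, 2 * a - p.2)

lemma mem_axisLine {ax : FoldAxis} {p : ℝ × ℝ} :
    p ∈ axisLine ax ↔ coord ax.vert p = ax.a := Iff.rfl

lemma coord_continuous (b : Bool) : Continuous (coord b) := by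
  cases b
  · exact continuous_snd
  · exact continuous_fst

lemma reflB_invol (v : Bool) (a : ℝ) (p : ℝ × ℝ) : reflB v a (reflB v a p) = p := by
  cases v <;> simp [reflB, Prod.ext_iff] <;> ring

lemma reflB_inj (v : Bool) (a : ℝ) : Function.Injective (reflB v a) := by
  intro x y h
  have := congrArg (reflB v a) h
  rwa [reflB_invol, reflB_invol] at this

lemma reflB_continuous (v : Bool) (a : ℝ) : Continuous (reflB v a) := by
  cases v
  · show Continuous fun p : ℝ × ℝ => ((p.1, 2 * a - p.2) : ℝ × ℝ)
    fun_prop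
  · show Continuous fun p : ℝ × ℝ => ((2 * a - p.1, p.2) : ℝ × ℝ)
    fun_prop

lemma coord_reflB_self (v : Bool) (a : ℝ) (p : ℝ × ℝ) :
    coord v (reflB v a p) = 2 * a - coord v p := by
  cases v <;> simp [coord, reflB]

lemma coord_reflB_other {b v : Bool} (h : b ≠ v) (a : ℝ) (p : ℝ × ℝ) :
    coord b (reflB v a p) = coord b p := by
  cases v <;> cases b <;> simp_all [coord, reflB]

lemma reflB_fixed {v : Bool} {a : ℝ} {p : ℝ × ℝ} (h : coord v p = a) :
    reflB v a p = p := by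
  cases v <;> simp_all [coord, reflB, Prod.ext_iff] <;> linarith

lemma reflB_affine (v : Bool) (a : ℝ) {α β : ℝ} (h : α + β = 1) (p q : ℝ × ℝ) :
    reflB v a (α • p + β • q) = α • reflB v a p + β • reflB v a q := by
  have hb : β = 1 - α := by linarith
  subst hb
  cases v <;> simp [reflB, Prod.ext_iff, Prod.smul_def] <;> ring

lemma segment_reflB_subset (v : Bool) (a : ℝ) (u w : ℝ × ℝ) :
    segment ℝ (reflB v a u) (reflB v a w) ⊆ reflB v a '' segment ℝ u w := by
  rintro x ⟨α, β, hα, hβ, hs, rfl⟩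
  exact ⟨α • u + β • w, ⟨α, β, hα, hβ, hs, rfl⟩, reflB_affine v a hs u w⟩

lemma coord_comb (b : Bool) {α β : ℝ} (p q : ℝ × ℝ) :
    coord b (α • p + β • q) = α * coord b p + β * coord b q := by
  cases b <;> simp [coord, Prod.smul_def]

lemma coord_mem_segment {b : Bool} {u w x : ℝ × ℝ} (hx : x ∈ segment ℝ u w) :
    coord b x ∈ segment ℝ (coord b u) (coord b w) := by
  obtain ⟨α, β, hα, hβ, hs, rfl⟩ := hx
  exact ⟨α, β, hα, hβ, hs, (coord_comb b u w).symm⟩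

lemma coord_eq_on_segment {b : Bool} {u w x : ℝ × ℝ} {c : ℝ}
    (hu : coord b u = c) (hw : coord b w = c) (hx : x ∈ segment ℝ u w) :
    coord b x = c := by
  have := coord_mem_segment (b := b) hx
  rw [hu, hw] at this
  simpa using this

lemma foldMap_apply (ax : FoldAxis) (p : ℝ × ℝ) :
    foldMap ax p =
      if (if ax.keepLow then coord ax.vert p ≤ ax.a else ax.a ≤ coord ax.vert p)
      then p else reflB ax.vert ax.a p := by
  unfold foldMap reflB coord
  split_ifs <;> rfl

lemma foldMap_of_le (ax : FoldAxis) (p : ℝ × ℝ) (h : coord ax.vert p ≤ ax.a) :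
    foldMap ax p = if ax.keepLow then p else reflB ax.vert ax.a p := by
  rw [foldMap_apply]
  by_cases hk : ax.keepLow
  · simp [hk, h]
  · simp only [hk, if_false, Bool.false_eq_true]
    split_ifs with h2
    · exact (reflB_fixed (le_antisymm h h2)).symm
    · rfl

lemma foldMap_of_ge (ax : FoldAxis) (p : ℝ × ℝ) (h : ax.a ≤ coord ax.vert p) :
    foldMap ax p = if ax.keepLow then reflB ax.vert ax.a p else p := by
  rw [foldMap_apply]
  by_cases hk : ax.keepLow
  · simp only [hk, if_true]
    split_ifs with h2
    · exact (reflB_fixed (le_antisymm h2 h)).symm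
    · rfl
  · simp [hk, h]

lemma coord_foldMap_other {b : Bool} {ax : FoldAxis} (h : b ≠ ax.vert) (p : ℝ × ℝ) :
    coord b (foldMap ax p) = coord b p := by
  rcases le_or_gt (coord ax.vert p) ax.a with hle | hlt
  · rw [foldMap_of_le ax p hle]
    split_ifs
    · rfl
    · exact coord_reflB_other h ax.a p
  · rw [foldMap_of_ge ax p hlt.le]
    split_ifs
    · exact coord_reflB_other h ax.a p
    · rfl

lemma coord_foldMap_congr {ax : FoldAxis} {p p' : ℝ × ℝ}
    (h : coord ax.vert p = coord ax.vert p') :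
    coord ax.vert (foldMap ax p) = coord ax.vert (foldMap ax p') := by
  rcases le_or_gt (coord ax.vert p) ax.a with hle | hlt
  · rw [foldMap_of_le ax p hle, foldMap_of_le ax p' (h ▸ hle)]
    split_ifs
    · exact h
    · rw [coord_reflB_self, coord_reflB_self, h]
  · rw [foldMap_of_ge ax p hlt.le, foldMap_of_ge ax p' (h ▸ hlt.le)]
    split_ifs
    · rw [coord_reflB_self, coord_reflB_self, h]
    · exact h

end NF

namespace NF

/-- The interior-preservation core lemma. -/
lemma mem_interior_image {P : Set (ℝ × ℝ)} {q : ℝ × ℝ} {ax : FoldAxis}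
    (hq : q ∈ interior P) (g : ℝ × ℝ → ℝ × ℝ)
    (hginv : ∀ x, g (g x) = x) (hgc : Continuous g)
    {U₀ : Set (ℝ × ℝ)} (hU₀ : IsOpen U₀) (hqU₀ : q ∈ U₀)
    (hg : ∀ x ∈ U₀, foldMap ax x = g x) :
    foldMap ax q ∈ interior (foldMap ax '' P) := by
  have himg : g '' (interior P ∩ U₀) = g ⁻¹' (interior P ∩ U₀) := by
    ext y
    constructor
    · rintro ⟨x, hx, rfl⟩
      simpa [hginv] using hx
    · intro hy
      exact ⟨g y, hy, hginv y⟩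
  rw [mem_interior]
  refine ⟨g '' (interior P ∩ U₀), ?_, ?_, ?_⟩
  · rintro y ⟨x, ⟨hx1, hx2⟩, rfl⟩
    exact ⟨x, interior_subset hx1, hg x hx2⟩
  · rw [himg]
    exact (isOpen_interior.inter hU₀).preimage hgc
  · rw [hg q hqU₀]
    exact ⟨q, ⟨hq, hqU₀⟩, rfl⟩

lemma facet_not_frontier {P : Set (ℝ × ℝ)} {q : ℝ × ℝ} {ax : FoldAxis}
    (hqP : q ∈ P) (hqF : q ∉ frontier P) (hqa : coord ax.vert q ≠ ax.a) :
    foldMap ax q ∉ frontier (foldMap ax '' P) := by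
  have hqI : q ∈ interior P := by
    by_contra h
    exact hqF ⟨subset_closure hqP, h⟩
  have key : foldMap ax q ∈ interior (foldMap ax '' P) := by
    rcases hqa.lt_or_gt with hlt | hgt
    · -- strictly low side
      refine mem_interior_image hqI
        (if ax.keepLow then id else reflB ax.vert ax.a) ?_ ?_
        ((isOpen_Iio.preimage (coord_continuous ax.vert)) :
          IsOpen {x | coord ax.vert x < ax.a}) hlt ?_
      · intro x
        split_ifs
        · rfl
        · exact reflB_invol _ _ _
      · split_ifs
        · exact continuous_id
        · exact reflB_continuous _ _
      · intro x hx
        rw [foldMap_of_le ax x (le_of_lt hx)]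
        split_ifs <;> rfl
    · refine mem_interior_image hqI
        (if ax.keepLow then reflB ax.vert ax.a else id) ?_ ?_
        ((isOpen_Ioi.preimage (coord_continuous ax.vert)) :
          IsOpen {x | ax.a < coord ax.vert x}) hgt ?_
      · intro x
        split_ifs
        · exact reflB_invol _ _ _
        · rfl
      · split_ifs
        · exact reflB_continuous _ _
        · exact continuous_id
      · intro x hx
        rw [foldMap_of_ge ax x (le_of_lt hx)]
        split_ifs <;> rfl
  exact fun h => h.2 key

lemma seg_image_g (ax : FoldAxis) (S : Set (ℝ × ℝ)) (u w : ℝ × ℝ) (huw : u ≠ w)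
    (hseg : segment ℝ u w ⊆ S)
    (hax : ∀ x ∈ segment ℝ u w, x ∉ axisLine ax)
    (g : ℝ × ℝ → ℝ × ℝ) (hg : ∀ x ∈ segment ℝ u w, foldMap ax x = g x)
    (hginj : Function.Injective g)
    (hgseg : segment ℝ (g u) (g w) ⊆ g '' segment ℝ u w) :
    foldMap ax u ≠ foldMap ax w ∧
      segment ℝ (foldMap ax u) (foldMap ax w) ⊆ foldMap ax '' (S \ axisLine ax) := by
  have hu := left_mem_segment ℝ u w
  have hw := right_mem_segment ℝ u w
  constructor
  · rw [hg u hu, hg w hw]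
    exact fun h => huw (hginj h)
  · rw [hg u hu, hg w hw]
    intro x hx
    obtain ⟨y, hy, rfl⟩ := hgseg hx
    exact ⟨y, ⟨hseg hy, hax y hy⟩, hg y hy⟩

lemma seg_image (ax : FoldAxis) (S : Set (ℝ × ℝ)) (u w : ℝ × ℝ) (huw : u ≠ w)
    (hseg : segment ℝ u w ⊆ S)
    (hside : (∀ x ∈ segment ℝ u w, coord ax.vert x < ax.a) ∨
             (∀ x ∈ segment ℝ u w, ax.a < coord ax.vert x)) :
    foldMap ax u ≠ foldMap ax w ∧
      segment ℝ (foldMap ax u) (foldMap ax w) ⊆ foldMap ax '' (S \ axisLine ax) := by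
  have hax : ∀ x ∈ segment ℝ u w, x ∉ axisLine ax := by
    intro x hx hmem
    rw [mem_axisLine] at hmem
    rcases hside with h | h
    · exact absurd hmem (h x hx).ne
    · exact absurd hmem.symm (h x hx).ne
  rcases hside with h | h
  · by_cases hk : ax.keepLow
    · refine seg_image_g ax S u w huw hseg hax id ?_ (fun _ _ h => h) (by simp)
      intro x hx
      rw [foldMap_of_le ax x (h x hx).le, if_pos hk]
      rfl
    · refine seg_image_g ax S u w huw hseg hax (reflB ax.vert ax.a) ?_
        (reflB_inj _ _) (segment_reflB_subset _ _ _ _)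
      intro x hx
      rw [foldMap_of_le ax x (h x hx).le, if_neg hk]
  · by_cases hk : ax.keepLow
    · refine seg_image_g ax S u w huw hseg hax (reflB ax.vert ax.a) ?_
        (reflB_inj _ _) (segment_reflB_subset _ _ _ _)
      intro x hx
      rw [foldMap_of_ge ax x (h x hx).le, if_pos hk]
    · refine seg_image_g ax S u w huw hseg hax id ?_ (fun _ _ h => h) (by simp)
      intro x hx
      rw [foldMap_of_ge ax x (h x hx).le, if_neg hk]
      rfl

lemma exists_subseg (p₁ p₂ : ℝ × ℝ) (v : Bool) (a : ℝ)
    (hne : coord v p₁ ≠ coord v p₂) :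
    ∃ u w : ℝ × ℝ, u ∈ segment ℝ p₁ p₂ ∧ w ∈ segment ℝ p₁ p₂ ∧ u ≠ w ∧
      ((coord v u < a ∧ coord v w < a) ∨ (a < coord v u ∧ a < coord v w)) := by
  set y₁ := coord v p₁ with hy₁
  set d := coord v p₂ - coord v p₁ with hd
  have hdne : d ≠ 0 := sub_ne_zero.mpr (Ne.symm hne)
  set t₀ : ℝ := (a - y₁) / d with ht₀def
  have ht₀ : t₀ * d = a - y₁ := div_mul_cancel₀ _ hdne
  have hpt : ∀ t : ℝ, p₁ + t • (p₂ - p₁) ∈ segment ℝ p₁ p₂ → True := fun _ _ => trivial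
  have hmem : ∀ t : ℝ, 0 ≤ t → t ≤ 1 → p₁ + t • (p₂ - p₁) ∈ segment ℝ p₁ p₂ := by
    intro t h0 h1
    rw [segment_eq_image']
    exact ⟨t, ⟨h0, h1⟩, rfl⟩
  have hcoord : ∀ t : ℝ, coord v (p₁ + t • (p₂ - p₁)) = y₁ + t * d := by
    intro t
    cases v <;> simp [coord, Prod.smul_def, hy₁, hd] <;> ring
  have hneq : ∀ s s' : ℝ, s ≠ s' → p₁ + s • (p₂ - p₁) ≠ p₁ + s' • (p₂ - p₁) := by
    intro s s' hss h
    have := congrArg (coord v) h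
    rw [hcoord, hcoord] at this
    have : s * d = s' * d := by linarith
    exact hss (mul_right_cancel₀ hdne this)
  by_cases ht : t₀ < 1 / 2
  · refine ⟨p₁ + (3/4 : ℝ) • (p₂ - p₁), p₁ + (1 : ℝ) • (p₂ - p₁),
      hmem _ (by norm_num) (by norm_num), hmem _ (by norm_num) (by norm_num),
      hneq _ _ (by norm_num), ?_⟩
    rw [hcoord, hcoord]
    rcases hdne.lt_or_gt with hdlt | hdgt
    · left
      constructor <;> nlinarith [ht₀, ht, hdlt]
    · right
      constructor <;> nlinarith [ht₀, ht, hdgt]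
  · refine ⟨p₁ + (0 : ℝ) • (p₂ - p₁), p₁ + (1/4 : ℝ) • (p₂ - p₁),
      hmem _ (by norm_num) (by norm_num), hmem _ (by norm_num) (by norm_num),
      hneq _ _ (by norm_num), ?_⟩
    rw [hcoord, hcoord]
    push_neg at ht
    rcases hdne.lt_or_gt with hdlt | hdgt
    · right
      constructor <;> nlinarith [ht₀, ht, hdlt]
    · left
      constructor <;> nlinarith [ht₀, ht, hdgt]

def Inv (P S : Set (ℝ × ℝ)) : Prop :=
  ∃ (b : Bool) (c : ℝ) (p₁ p₂ q : ℝ × ℝ),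
    p₁ ≠ p₂ ∧ segment ℝ p₁ p₂ ⊆ S ∧ coord b p₁ = c ∧ coord b p₂ = c ∧
    coord b q = c ∧ q ∈ P ∧ q ∉ S ∧ q ∉ frontier P

lemma main_step {P S : Set (ℝ × ℝ)} {ax : FoldAxis}
    (hlegal : LegalFold P S ax) (h : Inv P S) :
    Inv (foldMap ax '' P) (foldMap ax '' (S \ axisLine ax)) := by
  obtain ⟨b, c, p₁, p₂, q, hne, hsegS, hc1, hc2, hcq, hqP, hqS, hqF⟩ := h
  -- the facet point is not on the fold line
  have hqax : q ∉ axisLine ax := by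
    intro hmem
    rcases hlegal.1 ⟨hmem, hqP⟩ with h | h
    · exact hqS h
    · exact hqF h
  have hqa : coord ax.vert q ≠ ax.a := fun h => hqax (mem_axisLine.mpr h)
  have hFqP : foldMap ax q ∈ foldMap ax '' P := ⟨q, hqP, rfl⟩
  have hFqS : foldMap ax q ∉ foldMap ax '' (S \ axisLine ax) := by
    rintro ⟨s, ⟨hsS, _⟩, hFs⟩
    exact hlegal.2 s hsS q hqP hqS hqF hFs
  have hFqF : foldMap ax q ∉ frontier (foldMap ax '' P) :=
    facet_not_frontier hqP hqF hqa
  by_cases hb : b = ax.vert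
  · subst hb
    -- the crease line is parallel to the fold line
    have hca : c ≠ ax.a := fun h => hqa (h ▸ hcq)
    have hside : (∀ x ∈ segment ℝ p₁ p₂, coord ax.vert x < ax.a) ∨
        (∀ x ∈ segment ℝ p₁ p₂, ax.a < coord ax.vert x) := by
      rcases hca.lt_or_gt with h | h
      · left
        intro x hx
        rw [coord_eq_on_segment hc1 hc2 hx]
        exact h
      · right
        intro x hx
        rw [coord_eq_on_segment hc1 hc2 hx]
        exact h
    obtain ⟨hne', hsub'⟩ := seg_image ax S p₁ p₂ hne hsegS hside
    refine ⟨ax.vert, coord ax.vert (foldMap ax p₁), foldMap ax p₁, foldMap ax p₂,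
      foldMap ax q, hne', hsub', rfl, ?_, ?_, hFqP, hFqS, hFqF⟩
    · exact coord_foldMap_congr (hc2.trans hc1.symm)
    · exact coord_foldMap_congr (hcq.trans hc1.symm)
  · -- the crease line is perpendicular to the fold line
    have hvne : coord ax.vert p₁ ≠ coord ax.vert p₂ := by
      intro h
      apply hne
      have : ∀ b' : Bool, coord b' p₁ = coord b' p₂ := by
        intro b'
        by_cases hb' : b' = ax.vert
        · rw [hb']; exact h
        · have : b' = b := by
            cases b' <;> cases b <;> cases ax.vert <;> simp_all
          rw [this, hc1, hc2]
      have h1 := this true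
      have h2 := this false
      simp [coord] at h1 h2
      exact Prod.ext h1 h2
    obtain ⟨u, w, hu, hw, huw, hside⟩ := exists_subseg p₁ p₂ ax.vert ax.a hvne
    have hsub : segment ℝ u w ⊆ segment ℝ p₁ p₂ :=
      (convex_segment (𝕜 := ℝ) p₁ p₂).segment_subset hu hw
    have hside' : (∀ x ∈ segment ℝ u w, coord ax.vert x < ax.a) ∨
        (∀ x ∈ segment ℝ u w, ax.a < coord ax.vert x) := by
      rcases hside with ⟨h1, h2⟩ | ⟨h1, h2⟩
      · left
        intro x hx
        have := coord_mem_segment (b := ax.vert) hx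
        exact (convex_Iio ax.a).segment_subset h1 h2 this
      · right
        intro x hx
        have := coord_mem_segment (b := ax.vert) hx
        exact (convex_Ioi ax.a).segment_subset h1 h2 this
    obtain ⟨hne', hsub'⟩ := seg_image ax S u w huw (fun x hx => hsegS (hsub hx)) hside'
    refine ⟨b, c, foldMap ax u, foldMap ax w, foldMap ax q,
      hne', hsub', ?_, ?_, ?_, hFqP, hFqS, hFqF⟩
    · rw [coord_foldMap_other hb]
      exact coord_eq_on_segment hc1 hc2 hu
    · rw [coord_foldMap_other hb]
      exact coord_eq_on_segment hc1 hc2 hw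
    · rw [coord_foldMap_other hb]
      exact hcq

lemma chain (axes : List FoldAxis) :
    ∀ P S : Set (ℝ × ℝ), Inv P S → ChainLegal axes P S → (runFolds axes P S).2 ≠ ∅ := by
  induction axes with
  | nil =>
    intro P S hInv _
    obtain ⟨b, c, p₁, p₂, q, hne, hsegS, _⟩ := hInv
    exact Set.Nonempty.ne_empty ⟨p₁, hsegS (left_mem_segment ℝ p₁ p₂)⟩
  | cons ax rest ih =>
    intro P S hInv hcl
    exact ih _ _ (main_step hcl.1 hInv) hcl.2

end NF

/-- If some axis-aligned line `L` contains a (non-degenerate) crease of the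
pattern `(P, S)` and also a facet point `q` of `P` (a point of `P` not on a
crease and not on the boundary of `P`), then `(P, S)` admits no sequence of
legal infinite all-layers simple folds using up all creases. -/
theorem not_foldable_of_crease_line_through_facet
    (P S : Set (ℝ × ℝ)) (hS : S ⊆ P) (L : Set (ℝ × ℝ)) (c : ℝ)
    (hL : L = {p : ℝ × ℝ | p.1 = c} ∨ L = {p : ℝ × ℝ | p.2 = c})
    (p₁ p₂ : ℝ × ℝ) (hne : p₁ ≠ p₂) (hseg : segment ℝ p₁ p₂ ⊆ S ∩ L)
    (q : ℝ × ℝ) (hqL : q ∈ L) (hqP : q ∈ P) (hqS : q ∉ S) (hqF : q ∉ frontier P) :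
    ¬ SimplyFoldable P S := by
  rintro ⟨axes, hcl, hend⟩
  have hInv : NF.Inv P S := by
    rcases hL with rfl | rfl
    · exact ⟨true, c, p₁, p₂, q, hne, fun x hx => (hseg hx).1,
        (hseg (left_mem_segment ℝ p₁ p₂)).2, (hseg (right_mem_segment ℝ p₁ p₂)).2,
        hqL, hqP, hqS, hqF⟩
    · exact ⟨false, c, p₁, p₂, q, hne, fun x hx => (hseg hx).1,
        (hseg (left_mem_segment ℝ p₁ p₂)).2, (hseg (right_mem_segment ℝ p₁ p₂)).2,
        hqL, hqP, hqS, hqF⟩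
  exact NF.chain axes P S hInv hcl hend
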